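/- arXiv:1510.00495 — 2 statements merged into one kernel-verified Lean document; each statement's English description precedes it below -/
import Mathlib

section
/- Let {m_i} be a strictly increasing sequence of positive integers with (log m_{i+1})/(log m_i) → 1 and let φ: ℕ → ℝ⁺ be monotone increasing. Then limsup_{i→∞} φ(m_i)/log m_i = limsup_{n→∞} φ(n)/log n and liminf_{i→∞} φ(m_i)/log m_i = liminf_{n→∞} φ(n)/log n. -/
open Filter Set Metric
open scoped ENNReal Topology

namespace RecurrenceZeroOne

/-- The first return time of `x` to its initial `n`-cylinder:
`R_n(x) = inf {j ≥ 1 : x_{j+1} ⋯ x_{j+n} = x_1 ⋯ x_n}`, equal to `⊤` if no such `j` exists. -/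
noncomputable def R (m n : ℕ) (x : ℕ → Fin m) : ℕ∞ :=
  sInf {j : ℕ∞ | ∃ k : ℕ, j = (k : ℕ∞) ∧ 1 ≤ k ∧ ∀ i < n, x (k + i) = x i}

/-- `log` of an extended natural number, valued in `ℝ≥0∞`. -/
noncomputable def elog (a : ℕ∞) : ℝ≥0∞ :=
  if a = ⊤ then ⊤ else ENNReal.ofReal (Real.log a.toNat)

/-- The ratio `log R_n(x) / φ(n)` as an element of `ℝ≥0∞`. -/
noncomputable def ratio (m : ℕ) (φ : ℕ → ℝ) (x : ℕ → Fin m) (n : ℕ) : ℝ≥0∞ :=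
  elog (R m n x) / ENNReal.ofReal (φ n)

open Classical in
/-- The standard distance `d(x,y) = m^{-inf{k ≥ 0 : x_k ≠ y_k}}` on the full shift. -/
noncomputable def shiftDist (m : ℕ) (x y : ℕ → Fin m) : ℝ :=
  if x = y then 0 else (m : ℝ) ^ (-(PiNat.firstDiff x y : ℤ))

/-- The full shift with the metric `d(x,y) = m^{-inf{k ≥ 0 : x_k ≠ y_k}}`. -/
noncomputable instance shiftMetric (m : ℕ) [hm : Fact (2 ≤ m)] :
    MetricSpace (ℕ → Fin m) where
  dist := shiftDist m
  dist_self x := if_pos rfl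
  dist_comm x y := by
    show shiftDist m x y = shiftDist m y x
    unfold shiftDist
    rcases eq_or_ne x y with rfl | h
    · simp
    · rw [if_neg h, if_neg (Ne.symm h), PiNat.firstDiff_comm]
  dist_triangle x y z := by
    show shiftDist m x z ≤ shiftDist m x y + shiftDist m y z
    unfold shiftDist
    have hm1 : (1 : ℝ) ≤ (m : ℝ) := by
      have := hm.out; exact_mod_cast le_trans (by norm_num) this
    have hpos : ∀ k : ℕ, (0 : ℝ) < (m : ℝ) ^ (-(k : ℤ)) := fun k =>
      zpow_pos (lt_of_lt_of_le one_pos hm1) _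
    have hanti : ∀ a b : ℕ, a ≤ b → (m : ℝ) ^ (-(b : ℤ)) ≤ (m : ℝ) ^ (-(a : ℤ)) := by
      intro a b hab
      exact zpow_le_zpow_right₀ hm1 (by exact_mod_cast neg_le_neg (by exact_mod_cast hab))
    rcases eq_or_ne x z with rfl | hxz
    · rw [if_pos rfl]
      positivity
    rcases eq_or_ne x y with rfl | hxy
    · rw [if_pos rfl, zero_add]
    rcases eq_or_ne y z with rfl | hyz
    · rw [if_pos rfl, add_zero]
    rw [if_neg hxz, if_neg hxy, if_neg hyz]
    have hmin := PiNat.min_firstDiff_le x y z hxz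
    rcases le_total (PiNat.firstDiff x y) (PiNat.firstDiff y z) with h | h
    · have : PiNat.firstDiff x y ≤ PiNat.firstDiff x z := by
        simpa [min_eq_left h] using hmin
      calc (m : ℝ) ^ (-(PiNat.firstDiff x z : ℤ))
          ≤ (m : ℝ) ^ (-(PiNat.firstDiff x y : ℤ)) := hanti _ _ this
        _ ≤ _ := le_add_of_nonneg_right (hpos _).le
    · have : PiNat.firstDiff y z ≤ PiNat.firstDiff x z := by
        simpa [min_eq_right h] using hmin
      calc (m : ℝ) ^ (-(PiNat.firstDiff x z : ℤ))
          ≤ (m : ℝ) ^ (-(PiNat.firstDiff y z : ℤ)) := hanti _ _ this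
        _ ≤ _ := le_add_of_nonneg_left (hpos _).le
  eq_of_dist_eq_zero := by
    intro x y h
    by_contra hxy
    have h2 : shiftDist m x y = 0 := h
    unfold shiftDist at h2
    rw [if_neg hxy] at h2
    have hm1 : (0 : ℝ) < (m : ℝ) := by
      have := (Fact.out : 2 ≤ m); positivity
    exact absurd h2 (ne_of_gt (zpow_pos hm1 _))

/-- The set `E^φ_{α,β}`. -/
noncomputable def ESet (m : ℕ) (φ : ℕ → ℝ) (α β : ℝ≥0∞) : Set (ℕ → Fin m) :=
  {x | Filter.liminf (fun n => ratio m φ x n) Filter.atTop = α ∧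
       Filter.limsup (fun n => ratio m φ x n) Filter.atTop = β}

/-- The Cantor-type set `A({n_i},{ℓ_i})`. -/
def ASet (m : ℕ) (nseq ℓseq : ℕ → ℕ) : Set (ℕ → Fin m) :=
  {x | ∀ᶠ n in Filter.atTop, ∀ i, nseq i < n → n ≤ nseq (i + 1) →
        R m n x = (ℓseq (i + 1) : ℕ∞)}

/-- The shift map `σ`. -/
def shift (m : ℕ) (x : ℕ → Fin m) : ℕ → Fin m := fun i => x (i + 1)


/-!
Every `n > m 0` lies in a block `m i < n ≤ m (i + 1)`. On that block monotonicity of `φ` and `log`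
sandwiches `φ n / log n` between `ρᵢ⁻¹ · φ(mᵢ) / log mᵢ` and `ρᵢ · φ(mᵢ₊₁) / log mᵢ₊₁`, where
`ρᵢ = log mᵢ₊₁ / log mᵢ → 1`, so the factors `ρᵢ^{±1}` disappear in the `limsup` and `liminf`.
-/

section BlockIndex

variable {m : ℕ → ℕ}

/-- For `n > m 0`, the index `i` of the block `m i < n ≤ m (i + 1)` containing `n`. -/
noncomputable def blockIndex (m : ℕ → ℕ) (n : ℕ) : ℕ :=
  sInf {i | n ≤ m (i + 1)}

lemma le_apply_blockIndex_add_one (hm : StrictMono m) (n : ℕ) :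
    n ≤ m (blockIndex m n + 1) :=
  Nat.sInf_mem (s := {i | n ≤ m (i + 1)}) ⟨n, (hm.id_le n).trans (hm.monotone n.le_succ)⟩

lemma apply_blockIndex_lt {n : ℕ} (hn : m 0 < n) : m (blockIndex m n) < n := by
  rcases h : blockIndex m n with _ | i
  · exact hn
  · have : i ∉ {i | n ≤ m (i + 1)} :=
      Nat.notMem_of_lt_sInf (show i < blockIndex m n by omega)
    simpa using this

lemma tendsto_blockIndex (hm : StrictMono m) : Tendsto (blockIndex m) atTop atTop := by
  refine tendsto_atTop_atTop.2 fun b => ⟨m b + 1, fun n hn => ?_⟩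
  by_contra! hlt
  have := (le_apply_blockIndex_add_one hm n).trans (hm.monotone (Nat.succ_le_of_lt hlt))
  omega

end BlockIndex

section Transfer

variable {m : ℕ → ℕ} {u w : ℕ → ℝ≥0∞}

theorem limsup_comp_eq_of_le_mul_apply_add_one (hm : StrictMono m)
    (hw : Tendsto w atTop (𝓝 1))
    (h : ∀ᶠ i in atTop, ∀ n, m i < n → n ≤ m (i + 1) → u n ≤ w i * u (m (i + 1))) :
    limsup (u ∘ m) atTop = limsup u atTop := by
  set J := blockIndex m
  have hJ := tendsto_blockIndex hm
  have hwJ : limsup (w ∘ J) atTop = 1 := (hw.comp hJ).limsup_eq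
  have hbound : ∀ᶠ n in atTop, u n ≤ (w ∘ J * (u ∘ m) ∘ (· + 1) ∘ J) n := by
    filter_upwards [hJ.eventually h, eventually_gt_atTop (m 0)] with n hn h0
    exact hn n (apply_blockIndex_lt h0) (le_apply_blockIndex_add_one hm n)
  refine le_antisymm hm.tendsto_atTop.limsup_comp_le_limsup ?_
  calc limsup u atTop
      ≤ limsup (w ∘ J * (u ∘ m) ∘ (· + 1) ∘ J) atTop := limsup_le_limsup hbound
    _ ≤ limsup (w ∘ J) atTop * limsup ((u ∘ m) ∘ (· + 1) ∘ J) atTop :=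
        ENNReal.limsup_mul_le' (by simp [hwJ]) (by simp [hwJ])
    _ ≤ limsup (u ∘ m) atTop := by
        rw [hwJ, one_mul]
        exact ((tendsto_add_atTop_nat 1).comp hJ).limsup_comp_le_limsup

theorem liminf_comp_eq_of_mul_apply_le (hm : StrictMono m)
    (hw : Tendsto w atTop (𝓝 1))
    (h : ∀ᶠ i in atTop, ∀ n, m i < n → n ≤ m (i + 1) → w i * u (m i) ≤ u n) :
    liminf (u ∘ m) atTop = liminf u atTop := by
  set J := blockIndex m
  have hJ := tendsto_blockIndex hm
  have hwJ : liminf (w ∘ J) atTop = 1 := (hw.comp hJ).liminf_eq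
  have hbound : ∀ᶠ n in atTop, (w ∘ J * (u ∘ m) ∘ J) n ≤ u n := by
    filter_upwards [hJ.eventually h, eventually_gt_atTop (m 0)] with n hn h0
    exact hn n (apply_blockIndex_lt h0) (le_apply_blockIndex_add_one hm n)
  refine le_antisymm ?_ hm.tendsto_atTop.liminf_le_liminf_comp
  calc liminf (u ∘ m) atTop
      ≤ liminf (w ∘ J) atTop * liminf ((u ∘ m) ∘ J) atTop := by
        rw [hwJ, one_mul]
        exact hJ.liminf_le_liminf_comp
    _ ≤ liminf (w ∘ J * (u ∘ m) ∘ J) atTop := ENNReal.le_liminf_mul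
    _ ≤ liminf u atTop := liminf_le_liminf hbound

end Transfer

section Sandwich

variable {φ L : ℕ → ℝ} {a n b : ℕ}

lemma div_le_div_mul_div (hφ₀ : 0 ≤ φ) (hφ : Monotone φ) (hL : Monotone L) (ha : 0 < L a)
    (han : a ≤ n) (hnb : n ≤ b) :
    φ n / L n ≤ L b / L a * (φ b / L b) := by
  have hb : 0 < L b := ha.trans_le (hL (han.trans hnb))
  calc φ n / L n ≤ φ b / L a := div_le_div₀ (hφ₀ b) (hφ hnb) ha (hL han)
    _ = L b / L a * (φ b / L b) := by field_simp

lemma div_mul_div_le_div (hφ₀ : 0 ≤ φ) (hφ : Monotone φ) (hL : Monotone L) (ha : 0 < L a)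
    (han : a ≤ n) (hnb : n ≤ b) :
    L a / L b * (φ a / L a) ≤ φ n / L n := by
  have hn : 0 < L n := ha.trans_le (hL han)
  calc L a / L b * (φ a / L a) = φ a / L b := by field_simp
    _ ≤ φ n / L n := div_le_div₀ (hφ₀ n) (hφ han) hn (hL hnb)

end Sandwich

theorem limsup_liminf_div_comp_eq {m : ℕ → ℕ} {φ L : ℕ → ℝ} (hm : StrictMono m)
    (hφ₀ : 0 ≤ φ) (hφ : Monotone φ) (hL : Monotone L) (hL₀ : ∀ᶠ i in atTop, 0 < L (m i))
    (hρ : Tendsto (fun i => L (m (i + 1)) / L (m i)) atTop (𝓝 1)) :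
    limsup (fun i => ENNReal.ofReal (φ (m i) / L (m i))) atTop
        = limsup (fun n => ENNReal.ofReal (φ n / L n)) atTop ∧
      liminf (fun i => ENNReal.ofReal (φ (m i) / L (m i))) atTop
        = liminf (fun n => ENNReal.ofReal (φ n / L n)) atTop := by
  have hρ' : Tendsto (fun i => L (m i) / L (m (i + 1))) atTop (𝓝 1) := by
    simpa only [inv_div, inv_one] using hρ.inv₀ one_ne_zero
  constructor
  · refine limsup_comp_eq_of_le_mul_apply_add_one (u := fun n => ENNReal.ofReal (φ n / L n)) hm
      (by simpa using ENNReal.tendsto_ofReal hρ) ?_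
    filter_upwards [hL₀] with i hi n hin hni
    rw [← ENNReal.ofReal_mul (div_nonneg (hi.trans_le (hL (hm.monotone i.le_succ))).le hi.le)]
    exact ENNReal.ofReal_le_ofReal (div_le_div_mul_div hφ₀ hφ hL hi hin.le hni)
  · refine liminf_comp_eq_of_mul_apply_le (u := fun n => ENNReal.ofReal (φ n / L n)) hm
      (by simpa using ENNReal.tendsto_ofReal hρ') ?_
    filter_upwards [hL₀] with i hi n hin hni
    rw [← ENNReal.ofReal_mul (div_nonneg hi.le (hi.trans_le (hL (hm.monotone i.le_succ))).le)]
    exact ENNReal.ofReal_le_ofReal (div_mul_div_le_div hφ₀ hφ hL hi hin.le hni)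

lemma monotone_log_natCast : Monotone fun n : ℕ => Real.log n := by
  intro a b hab
  rcases Nat.eq_zero_or_pos a with rfl | ha
  · simpa using Real.log_natCast_nonneg b
  · exact Real.log_le_log (by exact_mod_cast ha) (by exact_mod_cast hab)

theorem limsup_liminf_along_subseq_general (mseq : ℕ → ℕ) (hsm : StrictMono mseq)
    (hlim : Filter.Tendsto (fun i => Real.log (mseq (i + 1)) / Real.log (mseq i))
      Filter.atTop (nhds 1))
    (φ : ℕ → ℝ) (hpos : ∀ n, 0 < φ n) (hmono : Monotone φ) :
    Filter.limsup (fun i => ENNReal.ofReal (φ (mseq i) / Real.log (mseq i)))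
        Filter.atTop
      = Filter.limsup (fun n => ENNReal.ofReal (φ n / Real.log n)) Filter.atTop ∧
    Filter.liminf (fun i => ENNReal.ofReal (φ (mseq i) / Real.log (mseq i)))
        Filter.atTop
      = Filter.liminf (fun n => ENNReal.ofReal (φ n / Real.log n)) Filter.atTop := by
  have hlog_pos : ∀ᶠ i in atTop, 0 < Real.log (mseq i) :=
    (Real.tendsto_log_atTop.comp
      (tendsto_natCast_atTop_atTop.comp hsm.tendsto_atTop)).eventually_gt_atTop 0
  exact limsup_liminf_div_comp_eq (L := fun n : ℕ => Real.log n) hsm (fun n => (hpos n).le)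
    hmono monotone_log_natCast hlog_pos hlim

/-- If `log m_{i+1}/log m_i → 1` and `φ` is monotone increasing, the `limsup` and
`liminf` of `φ(n)/log n` are attained along the subsequence `m_i`. -/
theorem limsup_liminf_along_subseq (mseq : ℕ → ℕ) (hsm : StrictMono mseq)
    (h1 : ∀ i, 1 ≤ mseq i)
    (hlim : Filter.Tendsto (fun i => Real.log (mseq (i + 1)) / Real.log (mseq i))
      Filter.atTop (nhds 1))
    (φ : ℕ → ℝ) (hpos : ∀ n, 0 < φ n) (hmono : Monotone φ) :
    Filter.limsup (fun i => ENNReal.ofReal (φ (mseq i) / Real.log (mseq i)))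
        Filter.atTop
      = Filter.limsup (fun n => ENNReal.ofReal (φ n / Real.log n)) Filter.atTop ∧
    Filter.liminf (fun i => ENNReal.ofReal (φ (mseq i) / Real.log (mseq i)))
        Filter.atTop
      = Filter.liminf (fun n => ENNReal.ofReal (φ n / Real.log n)) Filter.atTop :=
  limsup_liminf_along_subseq_general mseq hsm hlim φ hpos hmono

end RecurrenceZeroOne
end

section
/- Let φ: ℕ → ℝ⁺ be monotonically increasing, γ = limsup_{n→∞} φ(n)/log n, δ = liminf_{n→∞} φ(n)/log n, and 0 ≤ α ≤ β ≤ ∞. If αγ < 1 (with α, γ finite) or βδ < 1 (with β, δ finite), then the set E^φ_{α,β} = {x ∈ Σ : liminf_n (log R_n(x))/φ(n) = α, limsup_n (log R_n(x))/φ(n) = β} has Hausdorff dimension 0. -/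
open Filter Set Metric
open scoped ENNReal Topology

namespace RecurrenceZeroOne

/-!
Under either hypothesis there is a `c < 1` such that every `x ∈ E^φ_{α,β}` satisfies
`R_n(x) ≤ n^c` for infinitely many `n`: write `log R_n = (log R_n / φ(n)) · (φ(n) / log n) · log n`
and bound the liminf of the product of the first two factors by `αγ`, resp. `βδ`.

A return time `k ≤ K` makes the first `n` symbols `k`-periodic, so the points with `R_n ≤ K_n` lie
in at most `K_n m^{K_n}` cylinders of diameter `m^{-n}`. For `K_n = o(n)` these counts are summable
against `m^{-nd}` for every `d > 0`, and covering by the tails of the sequence of covers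
(a Hausdorff–Cantelli argument) gives `H^d = 0`.
-/

open MeasureTheory Measure
open scoped NNReal

section HausdorffCantelli

variable {X : Type*} [EMetricSpace X]

theorem tendsto_iSup_add_atTop_of_tendsto_zero {r : ℕ → ℝ≥0∞} (hr : Tendsto r atTop (𝓝 0)) :
    Tendsto (fun N => ⨆ k, r (k + N)) atTop (𝓝 0) := by
  have hanti : Antitone fun N => ⨆ k, r (k + N) := fun N N' hNN' =>
    iSup_le fun k => le_iSup_of_le (k + (N' - N)) (by rw [add_assoc, Nat.sub_add_cancel hNN'])
  convert tendsto_atTop_iInf hanti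
  rw [← limsup_eq_iInf_iSup_of_nat', hr.limsup_eq]

theorem hausdorffMeasure_setOf_frequently_eq_zero [MeasurableSpace X] [BorelSpace X]
    {ι : ℕ → Type*} [∀ n, Countable (ι n)] {d : ℝ} (E : ∀ n, ι n → Set X)
    {r : ℕ → ℝ≥0∞} (hr : Tendsto r atTop (𝓝 0)) (hE : ∀ n i, ediam (E n i) ≤ r n)
    (hsum : ∑' n, ∑' i, ediam (E n i) ^ d ≠ ∞) :
    μH[d] {x | ∃ᶠ n in atTop, ∃ i, x ∈ E n i} = 0 := by
  refine le_antisymm ?_ zero_le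
  have hcover : ∀ N, {x | ∃ᶠ n in atTop, ∃ i, x ∈ E n i} ⊆
      ⋃ j : Σ k, ι (k + N), E (j.1 + N) j.2 := by
    intro N x hx
    obtain ⟨n, ⟨i, hi⟩, hNn⟩ := (hx.and_eventually (eventually_ge_atTop N)).exists
    obtain ⟨k, rfl⟩ := Nat.exists_eq_add_of_le' hNn
    exact mem_iUnion.mpr ⟨⟨k, i⟩, hi⟩
  calc μH[d] {x | ∃ᶠ n in atTop, ∃ i, x ∈ E n i}
      ≤ liminf (fun N => ∑' j : Σ k, ι (k + N), ediam (E (j.1 + N) j.2) ^ d) atTop :=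
        hausdorffMeasure_le_liminf_tsum d _ _ (tendsto_iSup_add_atTop_of_tendsto_zero hr) _
          (.of_forall fun N j => (hE _ _).trans (le_iSup (fun k => r (k + N)) j.1))
          (.of_forall hcover)
    _ = 0 := by
        simp_rw [ENNReal.tsum_sigma']
        exact (ENNReal.tendsto_sum_nat_add _ hsum).liminf_eq

theorem dimH_setOf_frequently_eq_zero {ι : ℕ → Type*} [∀ n, Fintype (ι n)]
    (E : ∀ n, ι n → Set X) {r : ℕ → ℝ≥0} (hr : Tendsto r atTop (𝓝 0))
    (hE : ∀ n i, ediam (E n i) ≤ r n)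
    (hsum : ∀ d : ℝ, 0 < d → Summable fun n => (Fintype.card (ι n) : ℝ≥0) * r n ^ d) :
    dimH {x | ∃ᶠ n in atTop, ∃ i, x ∈ E n i} = 0 := by
  borelize X
  refine le_antisymm (ENNReal.le_of_forall_pos_le_add fun d hd _ => ?_) zero_le
  rw [zero_add]
  refine dimH_le_of_hausdorffMeasure_ne_top ?_
  rw [hausdorffMeasure_setOf_frequently_eq_zero E (ENNReal.tendsto_coe.mpr hr) hE ?_]
  · exact ENNReal.zero_ne_top
  refine ne_top_of_le_ne_top (ENNReal.tsum_coe_ne_top_iff_summable.mpr (hsum d hd))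
    (ENNReal.tsum_le_tsum fun n => ?_)
  calc ∑' i, ediam (E n i) ^ (d : ℝ) ≤ ∑ _i : ι n, (r n : ℝ≥0∞) ^ (d : ℝ) := by
        rw [tsum_fintype]
        exact Finset.sum_le_sum fun i _ => ENNReal.rpow_le_rpow (hE n i) d.coe_nonneg
    _ = _ := by
        rw [Finset.sum_const, Finset.card_univ, nsmul_eq_mul, ENNReal.coe_mul,
          ENNReal.coe_rpow_of_nonneg _ d.coe_nonneg, ENNReal.coe_natCast]

end HausdorffCantelli

theorem isLittleO_floor_rpow {c : ℝ} (hc : c < 1) :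
    (fun n : ℕ => (⌊(n : ℝ) ^ c⌋₊ : ℝ)) =o[atTop] (fun n => (n : ℝ)) := by
  have hrpow : (fun n : ℕ => (n : ℝ) ^ c) =o[atTop] (fun n => (n : ℝ)) := by
    rw [Asymptotics.isLittleO_iff_tendsto' ?_]
    · refine ((tendsto_rpow_neg_atTop (sub_pos.mpr hc)).comp tendsto_natCast_atTop_atTop).congr' ?_
      filter_upwards [eventually_ne_atTop 0] with n hn
      rw [Function.comp_apply, neg_sub, Real.rpow_sub_one (Nat.cast_ne_zero.mpr hn)]
    · filter_upwards [eventually_ne_atTop 0] with n hn h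
      exact absurd h (Nat.cast_ne_zero.mpr hn)
  refine (Asymptotics.IsBigO.of_bound 1 (.of_forall fun n => ?_)).trans_isLittleO hrpow
  rw [one_mul, Real.norm_natCast, Real.norm_of_nonneg (by positivity)]
  exact Nat.floor_le (by positivity)

theorem le_floor_rpow_of_elog_le {a : ℕ∞} {n : ℕ} (hn : n ≠ 0) {c : ℝ} (hc : 0 ≤ c)
    (h : elog a ≤ ENNReal.ofReal (c * Real.log n)) : a ≤ ⌊(n : ℝ) ^ c⌋₊ := by
  have ha : a ≠ ⊤ := by
    rintro rfl
    simp [elog] at h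
  lift a to ℕ using ha
  rw [elog, if_neg (ENat.natCast_ne_top a), ENat.toNat_natCast,
    ENNReal.ofReal_le_ofReal_iff (mul_nonneg hc (Real.log_natCast_nonneg n))] at h
  obtain rfl | ha0 := eq_or_ne a 0
  · simp
  exact_mod_cast Nat.le_floor ((Real.le_rpow_iff_log_le (by positivity) (by positivity)).mpr h)

section Shift

variable {m : ℕ}

theorem exists_return_le_of_R_le {n k : ℕ} {x : ℕ → Fin m} (h : R m n x ≤ k) :
    ∃ j, 1 ≤ j ∧ j ≤ k ∧ ∀ i < n, x (j + i) = x i := by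
  rw [R] at h
  have hS : {j : ℕ∞ | ∃ k : ℕ, j = (k : ℕ∞) ∧ 1 ≤ k ∧ ∀ i < n, x (k + i) = x i}.Nonempty := by
    by_contra hempty
    rw [not_nonempty_iff_eq_empty.mp hempty, sInf_empty] at h
    exact ENat.natCast_ne_top k (top_le_iff.mp h)
  obtain ⟨j, hRj, hj1, hj⟩ := csInf_mem hS
  exact ⟨j, hj1, by rw [hRj] at h; exact_mod_cast h, hj⟩

theorem apply_eq_apply_mod_of_forall_add_eq {α : Type*} {x : ℕ → α} {n k : ℕ} (hk : 0 < k)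
    (h : ∀ i < n, x (k + i) = x i) : ∀ i < n, x i = x (i % k) := by
  intro i
  induction i using Nat.strong_induction_on with
  | _ i ih =>
    intro hi
    rcases lt_or_ge i k with hik | hik
    · rw [Nat.mod_eq_of_lt hik]
    · obtain ⟨j, rfl⟩ := Nat.exists_eq_add_of_le hik
      rw [h j (by omega), ih j (by omega) (by omega), Nat.add_mod_left]

theorem ediam_cylinder_le [Fact (2 ≤ m)] (x : ℕ → Fin m) (n : ℕ) :
    ediam (PiNat.cylinder x n) ≤ ((m : ℝ≥0)⁻¹ ^ n : ℝ≥0) := by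
  refine ediam_le fun y hy z hz => ?_
  obtain rfl | hyz := eq_or_ne y z
  · simp
  have hn : n ≤ PiNat.firstDiff y z := by
    rw [← PiNat.mem_cylinder_iff_le_firstDiff hyz, PiNat.mem_cylinder_iff_eq,
      PiNat.mem_cylinder_iff_eq.mp hy, PiNat.mem_cylinder_iff_eq.mp hz]
  have hm : (1 : ℝ) ≤ m := by exact_mod_cast (Fact.out : 2 ≤ m).trans' one_le_two
  rw [edist_le_coe, ← NNReal.coe_le_coe, coe_nndist]
  change shiftDist m y z ≤ _
  rw [shiftDist, if_neg hyz, zpow_neg, zpow_natCast, ← inv_pow]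
  push_cast
  exact pow_le_pow_of_le_one (by positivity) (inv_le_one_of_one_le₀ hm) hn

/-- For `pw = (p, w)`, the `n`-cylinder of the `(p + 1)`-periodic sequence repeating
`w 0, …, w p`; the remaining entries of `w` are ignored. -/
def periodicCylinder (K n : ℕ) (pw : Fin K × (Fin K → Fin m)) : Set (ℕ → Fin m) :=
  PiNat.cylinder
    (fun i => pw.2 ⟨i % (pw.1 + 1), (Nat.mod_lt _ (Nat.succ_pos _)).trans_le pw.1.isLt⟩) n

theorem exists_mem_periodicCylinder_of_R_le {K n : ℕ} {x : ℕ → Fin m} (h : R m n x ≤ K) :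
    ∃ pw, x ∈ periodicCylinder K n pw := by
  obtain ⟨j, hj1, hjK, hj⟩ := exists_return_le_of_R_le h
  refine ⟨(⟨j - 1, by omega⟩, fun l => x l), fun i hi => ?_⟩
  simp only [Nat.sub_add_cancel hj1]
  exact apply_eq_apply_mod_of_forall_add_eq hj1 hj i hi

theorem summable_mul_pow_mul_inv_pow_rpow (hm : 2 ≤ m) {K : ℕ → ℕ}
    (hK : (fun n => (K n : ℝ)) =o[atTop] (fun n => (n : ℝ))) {d : ℝ} (hd : 0 < d) :
    Summable fun n => ((K n * m ^ K n : ℕ) : ℝ≥0) * ((m : ℝ≥0)⁻¹ ^ n) ^ d := by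
  rw [← NNReal.summable_coe]
  push_cast
  have hb : (1 : ℝ) < m := by exact_mod_cast hm
  have hb0 : (0 : ℝ) < m := one_pos.trans hb
  have hq : (m : ℝ) ^ (-(d / 2)) < 1 := Real.rpow_lt_one_of_one_lt_of_neg hb (by linarith)
  refine summable_of_isBigO_nat (summable_geometric_of_lt_one (by positivity) hq)
    (Asymptotics.IsBigO.of_bound 1 ?_)
  filter_upwards [hK.bound (c := d / 4) (by positivity)] with n hn
  rw [Real.norm_natCast, Real.norm_natCast] at hn
  have hK_le : (K n : ℝ) ≤ (m : ℝ) ^ K n := by exact_mod_cast (Nat.lt_pow_self hm).le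
  have hdecay : (((m : ℝ)⁻¹ ^ n) ^ d) = (m : ℝ) ^ (-(d * n)) := by
    rw [inv_pow, Real.inv_rpow (by positivity), ← Real.rpow_natCast, ← Real.rpow_mul hb0.le,
      Real.rpow_neg hb0.le, mul_comm]
  have hgeom : ((m : ℝ) ^ (-(d / 2))) ^ n = (m : ℝ) ^ (-(d / 2) * n) := by
    rw [← Real.rpow_natCast, ← Real.rpow_mul hb0.le]
  rw [one_mul, Real.norm_of_nonneg (by positivity), Real.norm_of_nonneg (by positivity), hdecay,
    hgeom]
  calc (K n : ℝ) * (m : ℝ) ^ K n * (m : ℝ) ^ (-(d * n))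
      ≤ (m : ℝ) ^ (K n : ℝ) * (m : ℝ) ^ (K n : ℝ) * (m : ℝ) ^ (-(d * n)) := by
        rw [Real.rpow_natCast]; gcongr
    _ = (m : ℝ) ^ ((K n : ℝ) + K n + -(d * n)) := by rw [Real.rpow_add hb0, Real.rpow_add hb0]
    _ ≤ (m : ℝ) ^ (-(d / 2) * n) := Real.rpow_le_rpow_of_exponent_le hb.le (by linarith)

theorem dimH_setOf_frequently_R_le [Fact (2 ≤ m)] {K : ℕ → ℕ}
    (hK : (fun n => (K n : ℝ)) =o[atTop] (fun n => (n : ℝ))) :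
    dimH {x : ℕ → Fin m | ∃ᶠ n in atTop, R m n x ≤ K n} = 0 := by
  have hm : 2 ≤ m := Fact.out
  have hsub : {x : ℕ → Fin m | ∃ᶠ n in atTop, R m n x ≤ K n} ⊆
      {x | ∃ᶠ n in atTop, ∃ pw, x ∈ periodicCylinder (K n) n pw} :=
    fun x hx => hx.mono fun n => exists_mem_periodicCylinder_of_R_le
  refine le_antisymm ((dimH_mono hsub).trans_eq ?_) zero_le
  refine dimH_setOf_frequently_eq_zero _
    (tendsto_pow_atTop_nhds_zero_of_lt_one zero_le (inv_lt_one_of_one_lt₀ ?_))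
    (fun n pw => ediam_cylinder_le _ n) fun d hd => ?_
  · exact_mod_cast hm
  · simpa using summable_mul_pow_mul_inv_pow_rpow hm hK hd

theorem elog_R_eq_ratio_mul {φ : ℕ → ℝ} {n : ℕ} (hφ : 0 < φ n) (hn : 1 < n) (x : ℕ → Fin m) :
    elog (R m n x) =
      ratio m φ x n * ENNReal.ofReal (φ n / Real.log n) * ENNReal.ofReal (Real.log n) := by
  have hlog : 0 < Real.log n := Real.log_pos (by exact_mod_cast hn)
  rw [mul_assoc, ← ENNReal.ofReal_mul (div_nonneg hφ.le hlog.le), div_mul_cancel₀ _ hlog.ne',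
    ratio, ENNReal.div_mul_cancel (ENNReal.ofReal_pos.mpr hφ).ne' ENNReal.ofReal_ne_top]

theorem frequently_R_le_floor_rpow {φ : ℕ → ℝ} (hpos : ∀ n, 0 < φ n) {x : ℕ → Fin m} {c : ℝ}
    (hc : 0 ≤ c)
    (h : liminf (fun n => ratio m φ x n * ENNReal.ofReal (φ n / Real.log n)) atTop <
      ENNReal.ofReal c) :
    ∃ᶠ n in atTop, R m n x ≤ ⌊(n : ℝ) ^ c⌋₊ := by
  refine ((frequently_lt_of_liminf_lt (by isBoundedDefault) h).and_eventually
    (eventually_gt_atTop 1)).mono fun n ⟨hlt, hn⟩ => le_floor_rpow_of_elog_le (by omega) hc ?_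
  rw [elog_R_eq_ratio_mul (hpos n) hn, ENNReal.ofReal_mul hc]
  exact mul_le_mul_left hlt.le _

end Shift

theorem dimH_ESet_eq_zero_general (m : ℕ) [Fact (2 ≤ m)] (φ : ℕ → ℝ)
    (hpos : ∀ n, 0 < φ n) (α β : ℝ≥0∞)
    (h : (α ≠ ⊤ ∧
          Filter.limsup (fun n => ENNReal.ofReal (φ n / Real.log n)) Filter.atTop ≠ ⊤ ∧
          α * Filter.limsup (fun n => ENNReal.ofReal (φ n / Real.log n)) Filter.atTop < 1) ∨
         (β ≠ ⊤ ∧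
          Filter.liminf (fun n => ENNReal.ofReal (φ n / Real.log n)) Filter.atTop ≠ ⊤ ∧
          β * Filter.liminf (fun n => ENNReal.ofReal (φ n / Real.log n)) Filter.atTop < 1)) :
    dimH (ESet m φ α β) = 0 := by
  set γ : ℕ → ℝ≥0∞ := fun n => ENNReal.ofReal (φ n / Real.log n)
  obtain ⟨L, hL1, hL⟩ : ∃ L < 1, ∀ x ∈ ESet m φ α β,
      liminf (fun n => ratio m φ x n * γ n) atTop ≤ L := by
    rcases h with ⟨hα, hγ, hαγ⟩ | ⟨hβ, hδ, hβδ⟩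
    · refine ⟨_, hαγ, fun x hx => ?_⟩
      simp_rw [mul_comm (ratio m φ x _)]
      rw [mul_comm, ← hx.1]
      exact ENNReal.liminf_mul_le (.inr (hx.1 ▸ hα)) (.inl hγ)
    · refine ⟨_, hβδ, fun x hx => ?_⟩
      rw [← hx.2]
      exact ENNReal.liminf_mul_le (.inr hδ) (.inl (hx.2 ▸ hβ))
  obtain ⟨C, hLC, hC1⟩ := exists_between hL1
  set c := C.toReal
  have hc : ENNReal.ofReal c = C := ENNReal.ofReal_toReal hC1.ne_top
  have hc1 : c < 1 := ENNReal.toReal_lt_of_lt_ofReal (by rwa [ENNReal.ofReal_one])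
  have hsub : ESet m φ α β ⊆ {x | ∃ᶠ n in atTop, R m n x ≤ ⌊(n : ℝ) ^ c⌋₊} := fun x hx =>
    frequently_R_le_floor_rpow hpos ENNReal.toReal_nonneg ((hL x hx).trans_lt (by rwa [hc]))
  exact le_antisymm
    ((dimH_mono hsub).trans_eq (dimH_setOf_frequently_R_le (isLittleO_floor_rpow hc1))) zero_le

/-- Zero-dimensional part of the main theorem: if `αγ < 1` (with `α, γ` finite) or
`βδ < 1` (with `β, δ` finite), then `dim_H E^φ_{α,β} = 0`. -/
theorem dimH_ESet_eq_zero (m : ℕ) [Fact (2 ≤ m)] (φ : ℕ → ℝ)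
    (hpos : ∀ n, 0 < φ n) (hmono : Monotone φ) (α β : ℝ≥0∞) (hαβ : α ≤ β)
    (h : (α ≠ ⊤ ∧
          Filter.limsup (fun n => ENNReal.ofReal (φ n / Real.log n)) Filter.atTop ≠ ⊤ ∧
          α * Filter.limsup (fun n => ENNReal.ofReal (φ n / Real.log n)) Filter.atTop < 1) ∨
         (β ≠ ⊤ ∧
          Filter.liminf (fun n => ENNReal.ofReal (φ n / Real.log n)) Filter.atTop ≠ ⊤ ∧
          β * Filter.liminf (fun n => ENNReal.ofReal (φ n / Real.log n)) Filter.atTop < 1)) :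
    dimH (ESet m φ α β) = 0 :=
  dimH_ESet_eq_zero_general m φ hpos α β h

end RecurrenceZeroOne
end
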